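/- arXiv:1410.7202 — 2 statements merged into one kernel-verified Lean document; each statement's English description precedes it below -/
import Mathlib

section
/- Let λ₁, …, λₙ be n mutually distinct complex numbers, a_q = 1 / ∏_{s ≠ q} (λ_q − λ_s), B_{n,q} = ∑_{i=1}^{n} a_i λᵢ^{n−1+q}, and f_n(x) = a₁ e^{λ₁ x} + ⋯ + aₙ e^{λₙ x}. Then for every real x the function f_n has the convergent power series expansion f_n(x) = x^{n−1}/(n−1)! + ∑_{q=1}^{∞} B_{n,q} x^{n−1+q}/(n−1+q)!. -/
/-!
Expanding each exponential, `f_n(x) = ∑_m (∑_i a_i λ_i^m) x^m / m!`. The inner sum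
`∑_i λ_i^m / ∏_{s ≠ i} (λ_i − λ_s)` is the coefficient of `X^{n−1}` in the Lagrange interpolant of
`X^m` at the `n` nodes; for `m < n` that interpolant is `X^m` itself, so the sum is `1` when
`m = n − 1` and `0` otherwise. Hence the first `n` terms of the series reduce to `x^{n−1}/(n−1)!`.
-/

open Finset Polynomial

theorem Lagrange.sum_pow_div_prod_sub {F ι : Type*} [Field F] [DecidableEq ι] {s : Finset ι}
    {v : ι → F} (hvs : Set.InjOn v s) {m : ℕ} (hm : m < #s) :
    ∑ i ∈ s, v i ^ m / ∏ j ∈ s.erase i, (v i - v j) = if m = #s - 1 then 1 else 0 := by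
  have hdeg : (X ^ m : F[X]).degree < #s := by rw [degree_X_pow]; exact_mod_cast hm
  simpa [coeff_X_pow, eq_comm] using (Lagrange.coeff_eq_sum hvs hdeg).symm

theorem hasSum_sum_mul_exp {ι : Type*} (s : Finset ι) (a l : ι → ℂ) (z : ℂ) :
    HasSum (fun m : ℕ => (∑ i ∈ s, a i * l i ^ m) * z ^ m / m.factorial)
      (∑ i ∈ s, a i * Complex.exp (l i * z)) := by
  have hexp (i : ι) : HasSum (fun m : ℕ => a i * ((l i * z) ^ m / m.factorial))
      (a i * Complex.exp (l i * z)) := by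
    have := NormedSpace.expSeries_div_hasSum_exp (l i * z)
    rw [← Complex.exp_eq_exp_ℂ] at this
    exact this.mul_left (a i)
  refine (hasSum_sum fun i (_ : i ∈ s) => hexp i).congr_fun fun m => ?_
  simp only [sum_mul, sum_div, mul_pow]
  refine sum_congr rfl fun i _ => ?_
  ring

/-- With `a_q = 1 / ∏_{s ≠ q} (λ_q − λ_s)`, `B_{n,q} = ∑_i a_i λ_i^{n-1+q}` and
`f_n(x) = ∑_i a_i e^{λ_i x}`, for every real `x` one has the convergent expansion
`f_n(x) = x^{n-1}/(n-1)! + ∑_{q=1}^∞ B_{n,q} x^{n-1+q}/(n-1+q)!`. -/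
theorem stmt9 (n : ℕ) (hn : 1 ≤ n) (l : Fin n → ℂ) (hl : Function.Injective l)
    (a : Fin n → ℂ)
    (ha : ∀ q, a q = (∏ s ∈ Finset.univ.erase q, (l q - l s))⁻¹)
    (B : ℕ → ℂ)
    (hB : ∀ q, B q = ∑ i, a i * l i ^ (n - 1 + q))
    (x : ℝ) :
    HasSum (fun q : ℕ => B (q + 1) * (x : ℂ) ^ (n - 1 + (q + 1)) /
        ((n - 1 + (q + 1)).factorial : ℂ))
      ((∑ i, a i * Complex.exp (l i * x)) -
        (x : ℂ) ^ (n - 1) / ((n - 1).factorial : ℂ)) := by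
  set c : ℕ → ℂ := fun m => ∑ i, a i * l i ^ m
  have hc {m : ℕ} (hm : m < n) : c m = if m = n - 1 then 1 else 0 := by
    have := Lagrange.sum_pow_div_prod_sub (s := univ) hl.injOn (m := m) (by simpa using hm)
    simpa [c, ha, div_eq_inv_mul] using this
  have hhead : ∑ m ∈ range n, c m * (x : ℂ) ^ m / m.factorial =
      (x : ℂ) ^ (n - 1) / (n - 1).factorial := by
    rw [sum_eq_single_of_mem (n - 1) (mem_range.2 (by omega))]
    · simp [hc (show n - 1 < n by omega)]
    · intro m hm hne
      simp [hc (mem_range.1 hm), hne]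
  have hseries := hasSum_sum_mul_exp univ a l x
  rw [← hasSum_nat_add_iff' n, hhead] at hseries
  refine hseries.congr_fun fun q => ?_
  rw [hB, show n - 1 + (q + 1) = q + n by omega]
end

section
/- (Theorem 3.2) Fix an integer n ≥ 1. For every δ > 0 there exists ε₀ > 0 such that: whenever λ₁, …, λₙ are mutually distinct complex numbers with |λᵢ| < ε₀ for all i, there exist functions f₁, …, fₙ, each belonging to the span of e^{λ₁ x}, …, e^{λₙ x} in L²([−π, π]), such that ‖f_s(x) − x^{s−1}‖_{L²([−π,π])} < δ for every s = 1, …, n. -/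
/-!
The divided differences `g[v₀, …, vₘ]` of `g(z) = e^{zx}` over distinct nodes are linear
combinations of the `e^{vᵢ x}`, and `m! · g[v₀, …, vₘ]` tends to `∂ᵐ_z e^{zx}|_{z=0} = xᵐ`
as the nodes tend to `0`. Quantitatively: by the Leibniz rule
`(z g)[v₀, …, vₘ] = v₀ g[v₀, …, vₘ] + g[v₁, …, vₘ]`, the divided difference of `zᵏ` over
`m + 1` nodes of modulus `≤ ε` vanishes for `k < m`, equals `1` for `k = m` and is bounded by
`C(k, m) εᵏ⁻ᵐ`. Expanding `e^{zx}` in powers of `z` then gives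
`|m! · g[v₀, …, vₘ] - xᵐ| ≤ |x|ᵐ (e^{|x|ε} - 1)`, uniformly for `|x| ≤ π`.
-/

open MeasureTheory

noncomputable def L2norm (g : ℝ → ℂ) : ℝ :=
  Real.sqrt (∫ x in Set.Icc (-Real.pi) Real.pi, ‖g x‖ ^ 2)

open Filter Topology
open scoped Nat Real

section DivDiff

variable {V : Type*} [AddCommGroup V] [Module ℂ V]

/-- The divided difference `g[v₀, …, vₘ]`; when `vₘ = v₀` the factor `(vₘ - v₀)⁻¹` is the junk
value `0`. -/
noncomputable def divDiff (g : ℂ → V) : {m : ℕ} → (Fin (m + 1) → ℂ) → V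
  | 0, v => g (v 0)
  | _ + 1, v => (v (Fin.last _) - v 0)⁻¹ • (divDiff g (Fin.tail v) - divDiff g (Fin.init v))

theorem divDiff_fin_one (g : ℂ → V) (v : Fin 1 → ℂ) : divDiff g v = g (v 0) := rfl

theorem divDiff_succ (g : ℂ → V) {m : ℕ} (v : Fin (m + 2) → ℂ) :
    divDiff g v = (v (Fin.last _) - v 0)⁻¹ • (divDiff g (Fin.tail v) - divDiff g (Fin.init v)) :=
  rfl

theorem divDiff_mem_span (g : ℂ → V) : ∀ {m : ℕ} (v : Fin (m + 1) → ℂ),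
    divDiff g v ∈ Submodule.span ℂ (Set.range (g ∘ v))
  | 0, _ => Submodule.subset_span ⟨0, rfl⟩
  | _ + 1, v => by
    refine Submodule.smul_mem _ _ (Submodule.sub_mem _ ?_ ?_)
    · exact Submodule.span_mono (Set.range_comp_subset_range _ _) (divDiff_mem_span g (Fin.tail v))
    · exact Submodule.span_mono (Set.range_comp_subset_range _ _) (divDiff_mem_span g (Fin.init v))

theorem divDiff_apply {ι W : Type*} [AddCommGroup W] [Module ℂ W] (g : ℂ → ι → W) (x : ι) :
    ∀ {m : ℕ} (v : Fin (m + 1) → ℂ), divDiff g v x = divDiff (fun z => g z x) v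
  | 0, _ => rfl
  | _ + 1, v => by
    rw [divDiff_succ, divDiff_succ, Pi.smul_apply, Pi.sub_apply, divDiff_apply g x (Fin.tail v),
      divDiff_apply g x (Fin.init v)]

theorem divDiff_smul (c : ℂ) (g : ℂ → V) : ∀ {m : ℕ} (v : Fin (m + 1) → ℂ),
    divDiff (fun z => c • g z) v = c • divDiff g v
  | 0, _ => rfl
  | _ + 1, v => by
    rw [divDiff_succ, divDiff_succ, divDiff_smul c g, divDiff_smul c g, ← smul_sub, smul_comm]

theorem divDiff_const (c : V) : ∀ {m : ℕ} (v : Fin (m + 2) → ℂ), divDiff (fun _ => c) v = 0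
  | 0, _ => by rw [divDiff_succ, divDiff_fin_one, divDiff_fin_one, sub_self, smul_zero]
  | _ + 1, v => by rw [divDiff_succ, divDiff_const c, divDiff_const c, sub_self, smul_zero]

theorem divDiff_id_smul (g : ℂ → V) : ∀ {m : ℕ} (v : Fin (m + 2) → ℂ), Function.Injective v →
    divDiff (fun z => z • g z) v = v 0 • divDiff g v + divDiff g (Fin.tail v)
  | 0, v, hv => by
    have h : v 1 - v 0 ≠ 0 := sub_ne_zero.2 (hv.ne (by decide))
    change (v 1 - v 0)⁻¹ • (v 1 • g (v 1) - v 0 • g (v 0)) =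
      v 0 • (v 1 - v 0)⁻¹ • (g (v 1) - g (v 0)) + g (v 1)
    linear_combination (norm := module) inv_mul_cancel₀ h • g (v 1)
  | m + 1, v, hv => by
    have h₀ : v (Fin.last _) - v 0 ≠ 0 := sub_ne_zero.2 (hv.ne (by simp [Fin.ext_iff]))
    have h₁ : v (Fin.last _) - v 1 ≠ 0 := sub_ne_zero.2 (hv.ne (by simp [Fin.ext_iff]))
    rw [divDiff_succ, divDiff_id_smul g (Fin.tail v) (hv.comp (Fin.succ_injective _)),
      divDiff_id_smul g (Fin.init v) (hv.comp (Fin.castSucc_injective _)), divDiff_succ g v]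
    set T := divDiff g (Fin.tail v)
    set I := divDiff g (Fin.init v)
    set TT := divDiff g (Fin.tail (Fin.tail v))
    set TI := divDiff g (Fin.tail (Fin.init v))
    have hT : T = (v (Fin.last _) - v 1)⁻¹ • (TT - TI) := divDiff_succ g (Fin.tail v)
    change _ • (v 1 • T + TT - (v 0 • I + TI)) = _
    linear_combination (norm := module)
      (-((v (Fin.last _) - v 0)⁻¹ * (v (Fin.last _) - v 1))) • hT
        - (v (Fin.last _) - v 0)⁻¹ • (mul_inv_cancel₀ h₁ • (TT - TI)) + inv_mul_cancel₀ h₀ • T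

theorem hasSum_divDiff [TopologicalSpace V] [IsTopologicalAddGroup V] [ContinuousConstSMul ℂ V]
    {F : ℕ → ℂ → V} {G : ℂ → V} :
    ∀ {m : ℕ} (v : Fin (m + 1) → ℂ), (∀ i, HasSum (fun k => F k (v i)) (G (v i))) →
      HasSum (fun k => divDiff (F k) v) (divDiff G v)
  | 0, _, h => h 0
  | _ + 1, v, h => ((hasSum_divDiff (Fin.tail v) fun _ => h _).sub
      (hasSum_divDiff (Fin.init v) fun _ => h _)).const_smul _

end DivDiff

theorem divDiff_pow_succ {m : ℕ} (v : Fin (m + 2) → ℂ) (hv : Function.Injective v) (k : ℕ) :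
    divDiff (· ^ (k + 1)) v = v 0 * divDiff (· ^ k) v + divDiff (· ^ k) (Fin.tail v) := by
  simpa only [smul_eq_mul, ← pow_succ'] using divDiff_id_smul (· ^ k) v hv

theorem divDiff_pow_of_lt {k : ℕ} : ∀ {m : ℕ} (v : Fin (m + 1) → ℂ), Function.Injective v →
    k < m → divDiff (· ^ k) v = 0 := by
  induction k with
  | zero =>
    rintro (_ | m) v - hm
    · omega
    · simpa only [pow_zero] using divDiff_const (1 : ℂ) v
  | succ k ih =>
    rintro (_ | m) v hv hm
    · omega
    rw [divDiff_pow_succ v hv, ih v hv (by omega),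
      ih (Fin.tail v) (hv.comp (Fin.succ_injective _)) (by omega), mul_zero, add_zero]

theorem divDiff_pow_self : ∀ {m : ℕ} (v : Fin (m + 1) → ℂ), Function.Injective v →
    divDiff (· ^ m) v = 1
  | 0, _, _ => pow_zero _
  | m + 1, v, hv => by
    rw [divDiff_pow_succ v hv, divDiff_pow_of_lt v hv m.lt_succ_self,
      divDiff_pow_self (Fin.tail v) (hv.comp (Fin.succ_injective _)), mul_zero, zero_add]

theorem norm_divDiff_pow_le {ε : ℝ} : ∀ {m : ℕ} (v : Fin (m + 1) → ℂ), Function.Injective v →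
    (∀ i, ‖v i‖ ≤ ε) → ∀ d, ‖divDiff (· ^ (d + m)) v‖ ≤ (d + m).choose m * ε ^ d
  | 0, v, _, hε, d => by
    simpa [divDiff_fin_one] using pow_le_pow_left₀ (norm_nonneg _) (hε 0) d
  | m + 1, v, hv, hε, d => by
    induction d with
    | zero => simp [divDiff_pow_self v hv]
    | succ d ih =>
      have htail := norm_divDiff_pow_le (Fin.tail v) (hv.comp (Fin.succ_injective _))
        (fun i => hε _) (d + 1)
      rw [show d + 1 + (m + 1) = d + (m + 1) + 1 by omega, divDiff_pow_succ v hv]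
      rw [show d + 1 + m = d + (m + 1) by omega] at htail
      calc _ ≤ ‖v 0‖ * ‖divDiff (· ^ (d + (m + 1))) v‖
              + ‖divDiff (· ^ (d + (m + 1))) (Fin.tail v)‖ :=
            (norm_add_le _ _).trans_eq (by rw [norm_mul])
        _ ≤ ε * ((d + (m + 1)).choose (m + 1) * ε ^ d) + (d + (m + 1)).choose m * ε ^ (d + 1) := by
            have hε₀ : 0 ≤ ε := (norm_nonneg _).trans (hε 0)
            gcongr
            exact hε 0
        _ = (d + (m + 1) + 1).choose (m + 1) * ε ^ (d + 1) := by
            rw [Nat.choose_succ_succ']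
            push_cast; ring

theorem HasSum.norm_sub_apply_zero_le {E : Type*} [SeminormedAddCommGroup E] {a : ℕ → E}
    {b : ℕ → ℝ} {A : E} {B : ℝ} (ha : HasSum a A) (hb : HasSum b B) (hab : ∀ d, ‖a d‖ ≤ b d) :
    ‖A - a 0‖ ≤ B - b 0 := by
  have ha' := (hasSum_nat_add_iff' 1).2 ha
  have hb' := (hasSum_nat_add_iff' 1).2 hb
  simp only [Finset.range_one, Finset.sum_singleton] at ha' hb'
  exact ha'.norm_le_of_bounded hb' fun d => hab _

theorem hasSum_divDiff_exp {m : ℕ} (v : Fin (m + 1) → ℂ) (x : ℂ) :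
    HasSum (fun k => x ^ k / k ! * divDiff (· ^ k) v) (divDiff (fun z => Complex.exp (z * x)) v) := by
  have hexp (z : ℂ) : HasSum (fun k => x ^ k / k ! * z ^ k) (Complex.exp (z * x)) := by
    rw [show (fun k => x ^ k / k ! * z ^ k) = fun k => (z * x) ^ k / k ! from
      funext fun k => by ring, Complex.exp_eq_exp_ℂ]
    exact NormedSpace.expSeries_div_hasSum_exp (z * x)
  have hterm (k : ℕ) :
      divDiff (fun z => x ^ k / k ! * z ^ k) v = x ^ k / k ! * divDiff (· ^ k) v :=
    divDiff_smul _ _ v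
  simpa only [hterm] using hasSum_divDiff (F := fun k z => x ^ k / k ! * z ^ k)
    (G := fun z => Complex.exp (z * x)) v fun i => hexp (v i)

theorem norm_pow_div_factorial_mul_divDiff_pow_le {m : ℕ} {ε : ℝ} (v : Fin (m + 1) → ℂ)
    (hv : Function.Injective v) (hε : ∀ i, ‖v i‖ ≤ ε) (x : ℂ) (d : ℕ) :
    ‖x ^ (d + m) / (d + m)! * divDiff (· ^ (d + m)) v‖ ≤ ‖x‖ ^ m / m ! * ((‖x‖ * ε) ^ d / d !) := by
  have hchoose : ((d + m).choose m * d ! * m ! : ℝ) = (d + m)! := by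
    exact_mod_cast Nat.add_choose_mul_factorial_mul_factorial d m
  have hc : ((d + m).choose m : ℝ) ≠ 0 := by
    exact_mod_cast (Nat.choose_pos (Nat.le_add_left m d)).ne'
  calc ‖x ^ (d + m) / (d + m)! * divDiff (· ^ (d + m)) v‖
      = ‖x‖ ^ (d + m) / (d + m)! * ‖divDiff (· ^ (d + m)) v‖ := by
        rw [norm_mul, norm_div, norm_pow, Complex.norm_natCast]
    _ ≤ ‖x‖ ^ (d + m) / (d + m)! * ((d + m).choose m * ε ^ d) := by
        gcongr; exact norm_divDiff_pow_le v hv hε d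
    _ = ‖x‖ ^ m / m ! * ((‖x‖ * ε) ^ d / d !) := by
        rw [← hchoose]; field_simp; ring

theorem norm_factorial_mul_divDiff_exp_sub_pow_le {m : ℕ} {ε : ℝ} (v : Fin (m + 1) → ℂ)
    (hv : Function.Injective v) (hε : ∀ i, ‖v i‖ ≤ ε) (x : ℂ) :
    ‖m ! * divDiff (fun z => Complex.exp (z * x)) v - x ^ m‖ ≤
      ‖x‖ ^ m * (Real.exp (‖x‖ * ε) - 1) := by
  have hseries := (hasSum_nat_add_iff' m).2 (hasSum_divDiff_exp v x)
  rw [Finset.sum_eq_zero fun k hk => by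
    rw [divDiff_pow_of_lt v hv (Finset.mem_range.1 hk), mul_zero], sub_zero] at hseries
  have hmajorant := (Real.exp_eq_exp_ℝ ▸ NormedSpace.expSeries_div_hasSum_exp (‖x‖ * ε)).mul_left
    (‖x‖ ^ m / m !)
  have key := hseries.norm_sub_apply_zero_le hmajorant
    (norm_pow_div_factorial_mul_divDiff_pow_le v hv hε x)
  simp only [zero_add, divDiff_pow_self v hv, mul_one, pow_zero, Nat.factorial_zero, Nat.cast_one,
    div_one] at key
  have hm : (m ! : ℂ) ≠ 0 := Nat.cast_ne_zero.2 m.factorial_ne_zero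
  calc ‖m ! * divDiff (fun z => Complex.exp (z * x)) v - x ^ m‖
      = (m ! : ℝ) * ‖divDiff (fun z => Complex.exp (z * x)) v - x ^ m / (m ! : ℂ)‖ := by
        rw [← Complex.norm_natCast, ← norm_mul, mul_sub, mul_div_cancel₀ _ hm]
    _ ≤ (m ! : ℝ) * (‖x‖ ^ m / m ! * Real.exp (‖x‖ * ε) - ‖x‖ ^ m / m !) := by gcongr
    _ = ‖x‖ ^ m * (Real.exp (‖x‖ * ε) - 1) := by field_simp

theorem L2norm_le_of_forall_norm_le {g : ℝ → ℂ} {B : ℝ} (h : ∀ x ∈ Set.Icc (-π) π, ‖g x‖ ≤ B) :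
    L2norm g ≤ B * √(2 * π) := by
  have hB : 0 ≤ B := (norm_nonneg _).trans (h 0 ⟨by linarith [Real.pi_pos], Real.pi_pos.le⟩)
  have hint : ∫ x in Set.Icc (-π) π, ‖g x‖ ^ 2 ≤ B ^ 2 * (2 * π) := by
    refine (le_abs_self _).trans ?_
    rw [← Real.norm_eq_abs, show 2 * π = π - -π by ring,
      ← Real.volume_real_Icc_of_le (by linarith [Real.pi_pos])]
    refine norm_setIntegral_le_of_norm_le_const measure_Icc_lt_top fun x hx => ?_
    rw [norm_pow, norm_norm]
    exact pow_le_pow_left₀ (norm_nonneg _) (h x hx) 2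
  calc L2norm g ≤ √(B ^ 2 * (2 * π)) := Real.sqrt_le_sqrt hint
    _ = B * √(2 * π) := by rw [Real.sqrt_mul (sq_nonneg B), Real.sqrt_sq hB]

theorem L2norm_factorial_smul_divDiff_exp_sub_pow_le {m : ℕ} {ε : ℝ} (v : Fin (m + 1) → ℂ)
    (hv : Function.Injective v) (hε : ∀ i, ‖v i‖ ≤ ε) :
    L2norm (fun x : ℝ =>
        ((m ! : ℂ) • divDiff (fun z (x : ℝ) => Complex.exp (z * x)) v) x - (x : ℂ) ^ m) ≤
      π ^ m * (Real.exp (π * ε) - 1) * √(2 * π) := by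
  refine L2norm_le_of_forall_norm_le fun x hx => ?_
  have hx : ‖(x : ℂ)‖ ≤ π := by rw [Complex.norm_real, Real.norm_eq_abs]; exact abs_le.2 hx
  have hε₀ : 0 ≤ ε := (norm_nonneg _).trans (hε 0)
  rw [Pi.smul_apply, divDiff_apply, smul_eq_mul]
  calc _ ≤ ‖(x : ℂ)‖ ^ m * (Real.exp (‖(x : ℂ)‖ * ε) - 1) :=
        norm_factorial_mul_divDiff_exp_sub_pow_le v hv hε x
    _ ≤ π ^ m * (Real.exp (π * ε) - 1) := by
        have : 0 ≤ Real.exp (‖(x : ℂ)‖ * ε) - 1 := sub_nonneg.2 (Real.one_le_exp (by positivity))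
        gcongr

/-- `s : Fin n` indexes the monomial `x ^ s`, the paper's `x^{s-1}`. -/
theorem stmt12_general (n : ℕ) :
    ∀ δ > (0 : ℝ), ∃ ε₀ > (0 : ℝ), ∀ l : Fin n → ℂ, Function.Injective l →
      (∀ i, ‖l i‖ < ε₀) →
      ∃ f : Fin n → (ℝ → ℂ),
        (∀ s, f s ∈ Submodule.span ℂ
          (Set.range fun i : Fin n => fun x : ℝ => Complex.exp (l i * x))) ∧
        ∀ s : Fin n, L2norm (fun x : ℝ => f s x - (x : ℂ) ^ (s : ℕ)) < δ := by
  intro δ hδ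
  have hsmall : ∀ᶠ ε in 𝓝[>] 0,
      ∀ s : Fin n, π ^ (s : ℕ) * (Real.exp (π * ε) - 1) * √(2 * π) < δ := by
    refine eventually_all.2 fun s => Tendsto.eventually_lt_const hδ ?_
    have hcont : Continuous fun ε => π ^ (s : ℕ) * (Real.exp (π * ε) - 1) * √(2 * π) := by
      fun_prop
    simpa using (hcont.tendsto 0).mono_left nhdsWithin_le_nhds
  obtain ⟨ε₀, hsmall, hε₀⟩ := (hsmall.and self_mem_nhdsWithin).exists
  refine ⟨ε₀, hε₀, fun l hl hlε => ?_⟩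
  let v (s : Fin n) : Fin (s + 1) → ℂ := fun i => l (Fin.castLE s.isLt i)
  have hv (s : Fin n) : Function.Injective (v s) := hl.comp (Fin.castLE_injective _)
  refine ⟨fun s => ((s : ℕ)! : ℂ) • divDiff (fun z (x : ℝ) => Complex.exp (z * x)) (v s),
    fun s => ?_, fun s => ?_⟩
  · have hrange : Set.range ((fun z (x : ℝ) => Complex.exp (z * x)) ∘ v s) ⊆
        Set.range fun i : Fin n => fun x : ℝ => Complex.exp (l i * x) :=
      Set.range_comp_subset_range (Fin.castLE s.isLt) fun i (x : ℝ) => Complex.exp (l i * x)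
    exact Submodule.smul_mem _ _ (Submodule.span_mono hrange (divDiff_mem_span _ (v s)))
  · exact (L2norm_factorial_smul_divDiff_exp_sub_pow_le (v s) (hv s)
      fun i => (hlε _).le).trans_lt (hsmall s)

/-- Theorem 3.2: for every `δ > 0` there is `ε₀ > 0` such that whenever
`λ₁, …, λₙ` are mutually distinct complex numbers with `|λᵢ| < ε₀`, there are
functions `f₁, …, fₙ` in the span of `e^{λ₁ x}, …, e^{λₙ x}` with
`‖f_s(x) − x^{s-1}‖_{L²([-π,π])} < δ` for all `s = 1, …, n`
(indices shifted so `s : Fin n` corresponds to the monomial `x^s`). -/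
theorem stmt12 (n : ℕ) (hn : 1 ≤ n) :
    ∀ δ > (0 : ℝ), ∃ ε₀ > (0 : ℝ), ∀ l : Fin n → ℂ, Function.Injective l →
      (∀ i, ‖l i‖ < ε₀) →
      ∃ f : Fin n → (ℝ → ℂ),
        (∀ s, f s ∈ Submodule.span ℂ
          (Set.range fun i : Fin n => fun x : ℝ => Complex.exp (l i * x))) ∧
        ∀ s : Fin n, L2norm (fun x : ℝ => f s x - (x : ℂ) ^ (s : ℕ)) < δ :=
  stmt12_general n
end
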